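/- Let v₁,…,v_r ∈ ℝ^n be linearly independent, let V be the r×n matrix with rows v_i^T, and let u₁,…,u_l ∈ span{v₁,…,v_r} be nonzero. Define R_v = ∏_{i=r}^{1} (I_n - 2 v_i v_i^T/‖v_i‖²) and R_u = R_v · ∏ (I_n - 2 u_i u_i^T/‖u_i‖²). If a vector w satisfies R_v w = w, then V w = 0 and also R_u w = w. Conversely, if V w = 0 then R_v w = w. -/
import Mathlib

open Matrix

noncomputable def reflOf {n : ℕ} (a : Fin n → ℝ) : Matrix (Fin n) (Fin n) ℝ :=
  1 - (2 / (∑ j, a j ^ 2)) • Matrix.vecMulVec a a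

noncomputable def reflProd {m n : ℕ} (A : Matrix (Fin m) (Fin n) ℝ) :
    Matrix (Fin n) (Fin n) ℝ :=
  (((List.finRange m).map (fun i => reflOf (A i))).reverse).prod

noncomputable def foldRefl {n : ℕ} (L : List (Fin n → ℝ)) (w : Fin n → ℝ) : Fin n → ℝ :=
  L.foldl (fun x a => (reflOf a).mulVec x) w

lemma reverse_prod_mulVec {n : ℕ} (L : List (Matrix (Fin n) (Fin n) ℝ)) (w : Fin n → ℝ) :
    (L.reverse.prod).mulVec w = L.foldl (fun x M => M.mulVec x) w := by
  induction L generalizing w with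
  | nil => simp
  | cons M L ih =>
    simp only [List.reverse_cons, List.prod_append, List.prod_cons, List.prod_nil, mul_one,
      List.foldl_cons]
    rw [← Matrix.mulVec_mulVec, ih]

lemma reflProd_mulVec {m n : ℕ} (A : Matrix (Fin m) (Fin n) ℝ) (w : Fin n → ℝ) :
    (reflProd A).mulVec w = foldRefl ((List.finRange m).map (fun i => A i)) w := by
  rw [reflProd, reverse_prod_mulVec, foldRefl]
  simp [List.foldl_map]

lemma reflOf_mulVec {n : ℕ} (a w : Fin n → ℝ) :
    (reflOf a).mulVec w = w - ((2 / (∑ j, a j ^ 2)) * (a ⬝ᵥ w)) • a := by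
  have hvv : (Matrix.vecMulVec a a).mulVec w = (a ⬝ᵥ w) • a := by
    ext k
    simp only [Matrix.vecMulVec, Matrix.mulVec, dotProduct, Matrix.of_apply,
      Pi.smul_apply, smul_eq_mul, Finset.sum_mul]
    exact Finset.sum_congr rfl (fun j _ => by ring)
  rw [reflOf, Matrix.sub_mulVec, Matrix.one_mulVec, Matrix.smul_mulVec, hvv, smul_smul]

lemma reflOf_mulVec_of_dot_zero {n : ℕ} (a w : Fin n → ℝ) (h : a ⬝ᵥ w = 0) :
    (reflOf a).mulVec w = w := by
  rw [reflOf_mulVec, h]; simp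

lemma foldRefl_fixed {n : ℕ} (L : List (Fin n → ℝ)) (w : Fin n → ℝ)
    (h : ∀ a ∈ L, a ⬝ᵥ w = 0) : foldRefl L w = w := by
  induction L generalizing w with
  | nil => rfl
  | cons a L ih =>
    rw [foldRefl, List.foldl_cons]
    rw [reflOf_mulVec_of_dot_zero a w (h a (by simp))]
    exact ih w (fun b hb => h b (by simp [hb]))

lemma foldRefl_sub_mem_span {n : ℕ} (L : List (Fin n → ℝ)) (w : Fin n → ℝ) :
    ∃ y ∈ Submodule.span ℝ {a | a ∈ L}, foldRefl L w = w + y := by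
  induction L generalizing w with
  | nil => exact ⟨0, Submodule.zero_mem _, by simp [foldRefl]⟩
  | cons a L ih =>
    obtain ⟨y, hy, hfy⟩ := ih ((reflOf a).mulVec w)
    refine ⟨y - ((2 / (∑ j, a j ^ 2)) * (a ⬝ᵥ w)) • a, ?_, ?_⟩
    · apply Submodule.sub_mem
      · exact Submodule.span_mono (fun x hx => List.mem_cons_of_mem a hx) hy
      · exact Submodule.smul_mem _ _ (Submodule.subset_span (by simp))
    · rw [foldRefl, List.foldl_cons, ← foldRefl, hfy, reflOf_mulVec]
      abel

lemma dot_self_pos {n : ℕ} (a : Fin n → ℝ) (ha : a ≠ 0) : 0 < ∑ j, a j ^ 2 := by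
  rcases Function.ne_iff.mp ha with ⟨j, hj⟩
  exact Finset.sum_pos' (fun i _ => sq_nonneg _) ⟨j, Finset.mem_univ j, lt_of_le_of_ne (sq_nonneg _) (Ne.symm (pow_ne_zero 2 hj))⟩

lemma key {n : ℕ} : ∀ (r : ℕ) (v : Fin r → (Fin n → ℝ)), LinearIndependent ℝ v →
    ∀ w : Fin n → ℝ, foldRefl ((List.finRange r).map v) w = w → ∀ i, v i ⬝ᵥ w = 0 := by
  intro r
  induction r with
  | zero => intro v _ w _ i; exact absurd i.2 (by omega)
  | succ r ih =>
    intro v hv w hfix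
    obtain ⟨hvt, hv0⟩ := linearIndependent_fin_succ.mp hv
    have hlist : (List.finRange (r + 1)).map v
        = v 0 :: (List.finRange r).map (Fin.tail v) := by
      rw [List.finRange_succ, List.map_cons, List.map_map]
      rfl
    rw [hlist, foldRefl, List.foldl_cons, ← foldRefl, reflOf_mulVec] at hfix
    set c : ℝ := (2 / ∑ j, v 0 j ^ 2) * (v 0 ⬝ᵥ w) with hc
    obtain ⟨y, hy, hfy⟩ := foldRefl_sub_mem_span ((List.finRange r).map (Fin.tail v)) (w - c • v 0)
    have hspan : Submodule.span ℝ {a | a ∈ (List.finRange r).map (Fin.tail v)}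
        = Submodule.span ℝ (Set.range (Fin.tail v)) := by
      congr 1
      ext x
      simp [List.mem_map, Set.mem_range, List.mem_finRange]
    have hcv : c • v 0 = y := by
      funext k
      have hk := congrFun (hfix.symm.trans hfy) k
      simp only [Pi.add_apply, Pi.sub_apply, Pi.smul_apply, smul_eq_mul] at hk ⊢
      linarith
    have hc0 : c = 0 := by
      by_contra hcne
      apply hv0
      have hmem : c • v 0 ∈ Submodule.span ℝ (Set.range (Fin.tail v)) := by
        rw [hcv, ← hspan]; exact hy
      have := Submodule.smul_mem _ c⁻¹ hmem
      rwa [smul_smul, inv_mul_cancel₀ hcne, one_smul] at this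
    have hdot0 : v 0 ⬝ᵥ w = 0 := by
      have hne : v 0 ≠ 0 := hv.ne_zero 0
      have hpos := dot_self_pos (v 0) hne
      have h2 : (2 / ∑ j, v 0 j ^ 2) ≠ 0 := ne_of_gt (div_pos two_pos hpos)
      exact (mul_eq_zero.mp hc0).resolve_left h2
    have hfix' : foldRefl ((List.finRange r).map (Fin.tail v)) w = w := by
      rw [hc0] at hfix
      simpa using hfix
    have htail := ih (Fin.tail v) hvt w hfix'
    intro i
    refine Fin.cases hdot0 (fun j => htail j) i

/-- for linearly independent `v₁,…,v_r` and nonzero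
`u₁,…,u_l ∈ span{v₁,…,v_r}`, with `R_v` the product of the `v`-reflections and
`R_u = R_v · (product of the u-reflections)`: `R_v w = w` implies `V w = 0` and
`R_u w = w`; conversely `V w = 0` implies `R_v w = w`. -/
theorem fixed_vector_iff (n r l : ℕ) (v : Fin r → (Fin n → ℝ))
    (hv : LinearIndependent ℝ v)
    (u : Fin l → (Fin n → ℝ)) (hu0 : ∀ i, u i ≠ 0)
    (hu : ∀ i, u i ∈ Submodule.span ℝ (Set.range v)) :
    ∀ w : Fin n → ℝ,
      ((reflProd (Matrix.of v)).mulVec w = w →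
        ((Matrix.of v).mulVec w = 0 ∧
          (reflProd (Matrix.of v) * reflProd (Matrix.of u)).mulVec w = w)) ∧
      ((Matrix.of v).mulVec w = 0 → (reflProd (Matrix.of v)).mulVec w = w) := by
  intro w
  have hVrow : ∀ i, (Matrix.of v).mulVec w i = v i ⬝ᵥ w := fun i => rfl
  constructor
  · intro hfix
    rw [reflProd_mulVec] at hfix
    have hdot : ∀ i, v i ⬝ᵥ w = 0 := key r v hv w hfix
    have hV0 : (Matrix.of v).mulVec w = 0 := by
      ext i; rw [hVrow i, hdot i]; rfl
    refine ⟨hV0, ?_⟩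
    have hudot : ∀ i, u i ⬝ᵥ w = 0 := by
      intro i
      refine Submodule.span_induction ?_ ?_ ?_ ?_ (hu i)
      · rintro x ⟨j, rfl⟩; exact hdot j
      · simp
      · intro x y _ _ hx hy; rw [add_dotProduct, hx, hy, add_zero]
      · intro a x _ hx; rw [smul_dotProduct, hx, smul_zero]
    have huf : (reflProd (Matrix.of u)).mulVec w = w := by
      rw [reflProd_mulVec]
      apply foldRefl_fixed
      intro a ha
      rw [List.mem_map] at ha
      obtain ⟨i, _, rfl⟩ := ha
      exact hudot i
    rw [← Matrix.mulVec_mulVec, huf, reflProd_mulVec]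
    exact hfix
  · intro hV0
    rw [reflProd_mulVec]
    apply foldRefl_fixed
    intro a ha
    rw [List.mem_map] at ha
    obtain ⟨i, _, rfl⟩ := ha
    have := congrFun hV0 i
    rw [hVrow i] at this
    exact this
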